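/- Let 0 ≤ c̲ ≤ c̄ ≤ min P and let prices p^1, …, p^T be drawn independently with p^t ∼ π^t. For every ε > 0, Pr[ ∃ c ∈ [c̲, c̄] : R̃^T(c) − R̄^T(c) ≤ −ε ] ≤ 2k²·exp( −ε² / (2k² Σ_{t=1}^T d_t²) ), where R̃^T(c) = Σ_{p∈P} max_{q∈P} R̃^T_{p,q}(c), R̄^T(c) = Σ_{p∈P} max_{q∈P} R̄^T_{p,q}(c), and d_t = (1/T)·(1/min_{p′∈C^t} π^t(p′) + 1)·p̄. -/

import Mathlib

/-!
The propensity-score estimate is unbiased: averaging `x̂ᵗ(p)` over `pᵗ ∼ πᵗ` gives the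
pessimistic allocation `x_*ᵗ(p)`. So for fixed `p, q, c` the difference
`R̃_{p,q}(c) - R̄_{p,q}(c)` is a sum of independent mean-zero terms, the `t`-th bounded by `d_t`
because `x̂ᵗ ≤ 1 / min πᵗ` on the support, and Hoeffding's inequality bounds its lower tail.
If `R̃(c) - R̄(c) ≤ -ε`, then choosing for every `p` a maximiser `q` of `R̄_{p,·}(c)` shows that
some pair `(p, q)` deviates by at most `-ε/k`; the deviation being affine in `c`, the same holds
at `c = c̲` or at `c = c̄`. A union bound over these at most `2k²` triples `(p, q, c)` concludes.
-/

open Finset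

def IsPMF (P : Finset ℝ) (f : ℝ → ℝ) : Prop :=
  (∀ p, 0 ≤ f p) ∧ (∑ p ∈ P, f p = 1) ∧ ∀ p, p ∉ P → f p = 0

noncomputable def suppF (P : Finset ℝ) (f : ℝ → ℝ) : Finset ℝ :=
  P.filter fun p => 0 < f p

def IsAllocSeq (P : Finset ℝ) {T : ℕ} (x : Fin T → ℝ → ℝ) : Prop :=
  ∀ t : Fin T, (∀ p ∈ P, x t p ∈ Set.Icc (0:ℝ) 1) ∧
    ∀ p ∈ P, ∀ q ∈ P, p ≤ q → x t q ≤ x t p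

noncomputable def regret (P : Finset ℝ) (hP : P.Nonempty) {T : ℕ}
    (π x : Fin T → ℝ → ℝ) (c : ℝ) : ℝ :=
  haveI : Nonempty {p : ℝ // p ∈ P} := Finset.nonempty_coe_sort.mpr hP
  Finset.univ.sup' Finset.univ_nonempty
    fun σ : {p : ℝ // p ∈ P} → {p : ℝ // p ∈ P} =>
      (T : ℝ)⁻¹ * ∑ t : Fin T, ∑ p ∈ P.attach,
        π t p.1 * (((σ p).1 - c) * x t (σ p).1 - (p.1 - c) * x t p.1)

noncomputable def pessA (P : Finset ℝ) {T : ℕ} (π x : Fin T → ℝ → ℝ)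
    (t : Fin T) (p : ℝ) : ℝ :=
  if p ∈ suppF P (π t) then x t p
  else if h : ((suppF P (π t)).filter fun r => r ≤ p).Nonempty then
    x t (((suppF P (π t)).filter fun r => r ≤ p).max' h)
  else 1

noncomputable def xhatF (P : Finset ℝ) {T : ℕ} (π x : Fin T → ℝ → ℝ)
    (t : Fin T) (s : ℝ) (p : ℝ) : ℝ :=
  if p ∈ suppF P (π t) then (if p = s then x t s / π t s else 0)
  else if h : ((suppF P (π t)).filter fun r => r ≤ p).Nonempty then
    (if ((suppF P (π t)).filter fun r => r ≤ p).max' h = s then x t s / π t s else 0)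
  else 1

open Classical in
noncomputable def probM (P : Finset ℝ) {T : ℕ} (π : Fin T → ℝ → ℝ)
    (E : (Fin T → ℝ) → Prop) : ℝ :=
  ∑ ps ∈ Fintype.piFinset (fun _ : Fin T => P),
    if E ps then ∏ t, π t (ps t) else 0

noncomputable def Rtilpq (P : Finset ℝ) {T : ℕ} (π x : Fin T → ℝ → ℝ)
    (c p q : ℝ) (ps : Fin T → ℝ) : ℝ :=
  (T : ℝ)⁻¹ * ∑ t : Fin T, π t p *
    ((q - c) * xhatF P π x t (ps t) q - (p - c) * xhatF P π x t (ps t) p)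

noncomputable def Rbarpq (P : Finset ℝ) {T : ℕ} (π x : Fin T → ℝ → ℝ)
    (c p q : ℝ) : ℝ :=
  (T : ℝ)⁻¹ * ∑ t : Fin T, π t p *
    ((q - c) * pessA P π x t q - (p - c) * pessA P π x t p)

-- The right-hand side is the chord of `exp` through `±l a`, evaluated at `l y`.
theorem exp_mul_le_cosh_add_sinh_div_mul {a y : ℝ} (l : ℝ) (ha : 0 < a) (hy : |y| ≤ a) :
    Real.exp (l * y) ≤ Real.cosh (l * a) + Real.sinh (l * a) / a * y := by
  obtain ⟨hy₁, hy₂⟩ := abs_le.mp hy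
  have hw₁ : 0 ≤ (a - y) / (2 * a) := div_nonneg (by linarith) (by positivity)
  have hw₂ : 0 ≤ (a + y) / (2 * a) := div_nonneg (by linarith) (by positivity)
  have hchord := convexOn_exp.2 (Set.mem_univ (-(l * a))) (Set.mem_univ (l * a)) hw₁ hw₂
    (by field_simp; ring)
  simp only [smul_eq_mul] at hchord
  have hmid : (a - y) / (2 * a) * -(l * a) + (a + y) / (2 * a) * (l * a) = l * y := by
    field_simp; ring
  rw [hmid] at hchord
  refine hchord.trans_eq ?_
  rw [Real.cosh_eq, Real.sinh_eq]
  field_simp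
  ring

theorem sum_mul_exp_le_exp_sq_of_abs_le {ι : Type*} {S : Finset ι} {w y : ι → ℝ} {a : ℝ}
    (l : ℝ) (hw : ∀ s ∈ S, 0 ≤ w s) (hw1 : ∑ s ∈ S, w s = 1) (hy : ∑ s ∈ S, w s * y s = 0)
    (hb : ∀ s ∈ S, 0 < w s → |y s| ≤ a) :
    ∑ s ∈ S, w s * Real.exp (l * y s) ≤ Real.exp (l ^ 2 * a ^ 2 / 2) := by
  rcases le_or_gt a 0 with ha | ha
  · have hterm : ∀ s ∈ S, w s * Real.exp (l * y s) = w s := by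
      intro s hs
      rcases (hw s hs).eq_or_lt with h | h
      · rw [← h, zero_mul]
      · rw [abs_nonpos_iff.mp ((hb s hs h).trans ha), mul_zero, Real.exp_zero, mul_one]
    rw [sum_congr rfl hterm, hw1]
    exact Real.one_le_exp (by positivity)
  calc ∑ s ∈ S, w s * Real.exp (l * y s)
      ≤ ∑ s ∈ S, w s * (Real.cosh (l * a) + Real.sinh (l * a) / a * y s) := by
        refine sum_le_sum fun s hs => ?_
        rcases (hw s hs).eq_or_lt with h | h
        · rw [← h, zero_mul, zero_mul]
        · exact mul_le_mul_of_nonneg_left (exp_mul_le_cosh_add_sinh_div_mul l ha (hb s hs h)) h.le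
    _ = Real.cosh (l * a) := by
        simp only [mul_add, sum_add_distrib, ← sum_mul, hw1, mul_left_comm (w _),
          ← mul_sum, hy]
        ring
    _ ≤ Real.exp (l ^ 2 * a ^ 2 / 2) := (Real.cosh_le_exp_half_sq _).trans_eq (by ring_nf)

theorem probM_le_sum_of_forall_exists {ι : Type*} (P : Finset ℝ) {T : ℕ} {π : Fin T → ℝ → ℝ}
    (hπ : ∀ t s, 0 ≤ π t s) {E : (Fin T → ℝ) → Prop} (I : Finset ι)
    (F : ι → (Fin T → ℝ) → Prop) (hEF : ∀ ps, E ps → ∃ i ∈ I, F i ps) :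
    probM P π E ≤ ∑ i ∈ I, probM P π (F i) := by
  classical
  unfold probM
  rw [sum_comm]
  refine sum_le_sum fun ps _ => ?_
  have hnonneg : ∀ i ∈ I, (0 : ℝ) ≤ if F i ps then ∏ t, π t (ps t) else 0 := fun i _ => by
    split_ifs
    exacts [prod_nonneg fun t _ => hπ t _, le_rfl]
  split_ifs with hE
  · obtain ⟨i, hi, hF⟩ := hEF ps hE
    exact (if_pos hF).symm.le.trans (single_le_sum hnonneg hi)
  · exact sum_nonneg hnonneg

theorem probM_sum_le_neg_le_exp (P : Finset ℝ) {T : ℕ} (π : Fin T → ℝ → ℝ)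
    (hpmf : ∀ t, IsPMF P (π t)) (Z : Fin T → ℝ → ℝ) (d : Fin T → ℝ)
    (hmean : ∀ t, ∑ s ∈ P, π t s * Z t s = 0)
    (hbound : ∀ t, ∀ s ∈ P, 0 < π t s → |Z t s| ≤ d t) {ε : ℝ} (hε : 0 ≤ ε) :
    probM P π (fun ps => ∑ t, Z t (ps t) ≤ -ε) ≤ Real.exp (-(ε ^ 2) / (2 * ∑ t, d t ^ 2)) := by
  set D := ∑ t, d t ^ 2
  -- the Chernoff parameter that minimises `-l ε + l ^ 2 D / 2`
  set l := ε / D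
  have hl : 0 ≤ l := div_nonneg hε (sum_nonneg fun t _ => sq_nonneg _)
  have hopt : -(l * ε) + l ^ 2 * D / 2 = -(ε ^ 2) / (2 * D) := by
    rcases eq_or_ne D 0 with hD | hD
    · simp [l, hD]
    · simp only [l]
      field_simp
      ring
  calc probM P π (fun ps => ∑ t, Z t (ps t) ≤ -ε)
      ≤ ∑ ps ∈ Fintype.piFinset fun _ : Fin T => P,
          Real.exp (-(l * ε)) * ∏ t, (π t (ps t) * Real.exp (-l * Z t (ps t))) := by
        refine sum_le_sum fun ps _ => ?_
        rw [prod_mul_distrib, ← Real.exp_sum, mul_left_comm, ← Real.exp_add]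
        have hprod : 0 ≤ ∏ t, π t (ps t) := prod_nonneg fun t _ => (hpmf t).1 _
        split_ifs with hE
        · refine le_mul_of_one_le_right hprod (Real.one_le_exp ?_)
          rw [← mul_sum]
          nlinarith
        · positivity
    _ = Real.exp (-(l * ε)) * ∏ t, ∑ s ∈ P, π t s * Real.exp (-l * Z t s) := by
        rw [← mul_sum, prod_univ_sum]
    _ ≤ Real.exp (-(l * ε)) * ∏ t, Real.exp ((-l) ^ 2 * d t ^ 2 / 2) := by
        gcongr with t
        · intro t _
          exact sum_nonneg fun s _ => mul_nonneg ((hpmf t).1 s) (Real.exp_pos _).le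
        · exact sum_mul_exp_le_exp_sq_of_abs_le _ (fun s _ => (hpmf t).1 s) (hpmf t).2.1
            (hmean t) (hbound t)
    _ = Real.exp (-(ε ^ 2) / (2 * D)) := by
        rw [← Real.exp_sum, ← Real.exp_add, ← hopt, ← sum_div, ← mul_sum, neg_sq]

section Estimator

variable {P : Finset ℝ} {T : ℕ} {π x : Fin T → ℝ → ℝ} {t : Fin T}

theorem sum_mul_ite_eq_div_of_mem_suppF {r : ℝ} (hr : r ∈ suppF P (π t)) :
    ∑ s ∈ P, π t s * (if r = s then x t s / π t s else 0) = x t r := by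
  obtain ⟨hrP, hr⟩ := mem_filter.mp hr
  simp only [mul_ite, mul_zero, sum_ite_eq, hrP, if_true, mul_div_cancel₀ _ hr.ne']

theorem sum_mul_xhatF_eq_pessA (hpmf : IsPMF P (π t)) (p : ℝ) :
    ∑ s ∈ P, π t s * xhatF P π x t s p = pessA P π x t p := by
  by_cases hp : p ∈ suppF P (π t)
  · simp only [xhatF, pessA, hp, if_true]
    exact sum_mul_ite_eq_div_of_mem_suppF hp
  by_cases h : ((suppF P (π t)).filter fun r => r ≤ p).Nonempty
  · simp only [xhatF, pessA, hp, if_false, dif_pos h]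
    exact sum_mul_ite_eq_div_of_mem_suppF (mem_filter.mp (max'_mem _ h)).1
  · simp only [xhatF, pessA, hp, if_false, dif_neg h, mul_one, hpmf.2.1]

theorem pessA_mem_Icc (hx : IsAllocSeq P x) (p : ℝ) : pessA P π x t p ∈ Set.Icc 0 1 := by
  unfold pessA
  split_ifs with hp h
  · exact (hx t).1 p (mem_filter.mp hp).1
  · exact (hx t).1 _ (mem_filter.mp (mem_filter.mp (max'_mem _ h)).1).1
  · exact ⟨zero_le_one, le_rfl⟩

theorem xhatF_mem_Icc (hpmf : IsPMF P (π t)) (hx : IsAllocSeq P x)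
    (hne : (suppF P (π t)).Nonempty) {s : ℝ} (hs : s ∈ suppF P (π t)) (p : ℝ) :
    xhatF P π x t s p ∈ Set.Icc 0 (1 / (suppF P (π t)).inf' hne (π t)) := by
  obtain ⟨hsP, hπs⟩ := mem_filter.mp hs
  have hmin_le : (suppF P (π t)).inf' hne (π t) ≤ π t s := inf'_le _ hs
  have hmin_pos : 0 < (suppF P (π t)).inf' hne (π t) := (lt_inf'_iff hne).mpr
    fun r hr => (mem_filter.mp hr).2
  have hπs_le : π t s ≤ 1 := hpmf.2.1 ▸ single_le_sum (fun r _ => hpmf.1 r) hsP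
  have hzero : (0 : ℝ) ∈ Set.Icc 0 (1 / (suppF P (π t)).inf' hne (π t)) :=
    ⟨le_rfl, by positivity⟩
  have hone : (1 : ℝ) ∈ Set.Icc 0 (1 / (suppF P (π t)).inf' hne (π t)) :=
    ⟨zero_le_one, (one_le_div hmin_pos).mpr (hmin_le.trans hπs_le)⟩
  have hratio : x t s / π t s ∈ Set.Icc 0 (1 / (suppF P (π t)).inf' hne (π t)) :=
    ⟨div_nonneg ((hx t).1 s hsP).1 hπs.le,
      div_le_div₀ zero_le_one ((hx t).1 s hsP).2 hmin_pos hmin_le⟩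
  unfold xhatF
  split_ifs <;> assumption

end Estimator

theorem abs_mul_sub_mul_le {w a b u v B M : ℝ} (hw : w ∈ Set.Icc (0 : ℝ) 1)
    (ha : a ∈ Set.Icc 0 B) (hb : b ∈ Set.Icc 0 B) (hu : u ∈ Set.Icc 0 M)
    (hv : v ∈ Set.Icc 0 M) : |w * (a * u - b * v)| ≤ B * M := by
  rw [abs_mul, abs_of_nonneg hw.1]
  refine (mul_le_of_le_one_left (abs_nonneg _) hw.2).trans ?_
  exact abs_sub_le_of_nonneg_of_le (mul_nonneg ha.1 hu.1)
    (mul_le_mul ha.2 hu.2 hu.1 (ha.1.trans ha.2)) (mul_nonneg hb.1 hv.1)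
    (mul_le_mul hb.2 hv.2 hv.1 (ha.1.trans ha.2))

noncomputable def pairDeviation (P : Finset ℝ) {T : ℕ} (π x : Fin T → ℝ → ℝ) (c p q : ℝ)
    (t : Fin T) (s : ℝ) : ℝ :=
  (T : ℝ)⁻¹ * (π t p * ((q - c) * xhatF P π x t s q - (p - c) * xhatF P π x t s p)) -
    (T : ℝ)⁻¹ * (π t p * ((q - c) * pessA P π x t q - (p - c) * pessA P π x t p))

section PairDeviation

variable {P : Finset ℝ} {T : ℕ} {π x : Fin T → ℝ → ℝ} {c p q : ℝ}

theorem Rtilpq_sub_Rbarpq_eq_sum_pairDeviation (ps : Fin T → ℝ) :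
    Rtilpq P π x c p q ps - Rbarpq P π x c p q = ∑ t, pairDeviation P π x c p q t (ps t) := by
  simp only [Rtilpq, Rbarpq, pairDeviation, mul_sum, sum_sub_distrib]

theorem Rtilpq_sub_Rbarpq_affine (ps : Fin T → ℝ) :
    ∃ α β : ℝ, ∀ c, Rtilpq P π x c p q ps - Rbarpq P π x c p q = α + β * c := by
  refine ⟨Rtilpq P π x 0 p q ps - Rbarpq P π x 0 p q,
    -((T : ℝ)⁻¹ * ∑ t, π t p * ((xhatF P π x t (ps t) q - pessA P π x t q) -
      (xhatF P π x t (ps t) p - pessA P π x t p))), fun c => ?_⟩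
  simp only [Rtilpq_sub_Rbarpq_eq_sum_pairDeviation, pairDeviation, mul_sum, ← sum_neg_distrib,
    sum_mul, ← sum_add_distrib]
  exact sum_congr rfl fun t _ => by ring

theorem sum_mul_pairDeviation_eq_zero {t : Fin T} (hpmf : IsPMF P (π t)) :
    ∑ s ∈ P, π t s * pairDeviation P π x c p q t s = 0 := by
  have hterm : ∀ s, π t s * pairDeviation P π x c p q t s =
      (T : ℝ)⁻¹ * π t p * ((q - c) * (π t s * xhatF P π x t s q) -
        (p - c) * (π t s * xhatF P π x t s p)) -
      (T : ℝ)⁻¹ * (π t p * ((q - c) * pessA P π x t q - (p - c) * pessA P π x t p)) * π t s :=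
    fun s => by unfold pairDeviation; ring
  simp only [hterm, sum_sub_distrib, ← mul_sum, sum_mul_xhatF_eq_pessA hpmf,
    hpmf.2.1]
  ring

theorem abs_pairDeviation_le (hP : P.Nonempty) {t : Fin T} (hpmf : IsPMF P (π t))
    (hx : IsAllocSeq P x) (hne : (suppF P (π t)).Nonempty) (hp : p ∈ P) (hq : q ∈ P)
    (hc₀ : 0 ≤ c) (hc : c ≤ P.min' hP) {s : ℝ} (hs : s ∈ suppF P (π t)) :
    |pairDeviation P π x c p q t s| ≤
      (T : ℝ)⁻¹ * (1 / (suppF P (π t)).inf' hne (π t) + 1) * P.max' hP := by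
  have hπp : π t p ∈ Set.Icc (0 : ℝ) 1 :=
    ⟨hpmf.1 p, hpmf.2.1 ▸ single_le_sum (fun r _ => hpmf.1 r) hp⟩
  have hmargin : ∀ r ∈ P, r - c ∈ Set.Icc 0 (P.max' hP) := fun r hr =>
    ⟨by linarith [P.min'_le r hr], by linarith [P.le_max' r hr]⟩
  have hxhat := abs_mul_sub_mul_le hπp (hmargin q hq) (hmargin p hp)
    (xhatF_mem_Icc hpmf hx hne hs q) (xhatF_mem_Icc hpmf hx hne hs p)
  have hpess : |π t p * ((q - c) * pessA P π x t q - (p - c) * pessA P π x t p)| ≤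
      P.max' hP * 1 :=
    abs_mul_sub_mul_le hπp (hmargin q hq) (hmargin p hp) (pessA_mem_Icc hx q) (pessA_mem_Icc hx p)
  have hT : (0 : ℝ) ≤ (T : ℝ)⁻¹ := by positivity
  calc |pairDeviation P π x c p q t s|
      ≤ (T : ℝ)⁻¹ * (P.max' hP * (1 / (suppF P (π t)).inf' hne (π t))) +
          (T : ℝ)⁻¹ * (P.max' hP * 1) := by
        refine (abs_sub _ _).trans (add_le_add ?_ ?_) <;>
          rw [abs_mul, abs_of_nonneg hT] <;> gcongr
    _ = (T : ℝ)⁻¹ * (1 / (suppF P (π t)).inf' hne (π t) + 1) * P.max' hP := by ring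

theorem probM_Rtilpq_sub_Rbarpq_le (hP : P.Nonempty) (hpmf : ∀ t, IsPMF P (π t))
    (hsupp : ∀ t, (suppF P (π t)).Nonempty) (hx : IsAllocSeq P x) (hp : p ∈ P) (hq : q ∈ P)
    (hc₀ : 0 ≤ c) (hc : c ≤ P.min' hP) {ε : ℝ} (hε : 0 ≤ ε) :
    probM P π (fun ps => Rtilpq P π x c p q ps - Rbarpq P π x c p q ≤ -ε) ≤
      Real.exp (-(ε ^ 2) / (2 * ∑ t : Fin T,
        ((T : ℝ)⁻¹ * (1 / ((suppF P (π t)).inf' (hsupp t) (π t)) + 1) * P.max' hP) ^ 2)) := by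
  simp only [Rtilpq_sub_Rbarpq_eq_sum_pairDeviation]
  exact probM_sum_le_neg_le_exp P π hpmf _ _ (fun t => sum_mul_pairDeviation_eq_zero (hpmf t))
    (fun t s hs hπs => abs_pairDeviation_le hP (hpmf t) hx (hsupp t) hp hq hc₀ hc
      (mem_filter.mpr ⟨hs, hπs⟩)) hε

end PairDeviation

theorem min_le_of_mem_Icc_of_affine {f : ℝ → ℝ} {α β a b c : ℝ} (hf : ∀ y, f y = α + β * y)
    (hc : c ∈ Set.Icc a b) : min (f a) (f b) ≤ f c := by
  simp only [hf]
  rcases le_total 0 β with hβ | hβ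
  · exact min_le_of_left_le (by nlinarith [hc.1])
  · exact min_le_of_right_le (by nlinarith [hc.2])

theorem exists_sub_le_of_sum_sup'_sub_sum_sup'_le {α β : Type*} {s : Finset α} {t : Finset β}
    (hs : s.Nonempty) (ht : t.Nonempty) {f g : α → β → ℝ} {ε : ℝ}
    (h : ∑ a ∈ s, t.sup' ht (f a) - ∑ a ∈ s, t.sup' ht (g a) ≤ -ε) :
    ∃ a ∈ s, ∃ b ∈ t, f a b - g a b ≤ -ε / s.card := by
  choose b hbt hb using fun a => exists_mem_eq_sup' ht (g a)
  have hsum : ∑ a ∈ s, (f a (b a) - g a (b a)) ≤ ∑ _a ∈ s, -ε / s.card := by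
    rw [sum_const, nsmul_eq_mul, mul_div_cancel₀ _ (by exact_mod_cast hs.card_pos.ne'),
      sum_sub_distrib]
    simp only [hb] at h
    linarith [sum_le_sum fun a (_ : a ∈ s) => le_sup' (f a) (hbt a)]
  obtain ⟨a, has, hle⟩ := exists_le_of_sum_le hs hsum
  exact ⟨a, has, b a, hbt a, hle⟩

theorem exists_pair_endpoint_of_sum_sup'_sub_le {P : Finset ℝ} (hP : P.Nonempty) {T : ℕ}
    {π x : Fin T → ℝ → ℝ} {clo chi ε : ℝ} {ps : Fin T → ℝ}
    (h : ∃ c ∈ Set.Icc clo chi,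
      (∑ p ∈ P, P.sup' hP fun q => Rtilpq P π x c p q ps) -
        (∑ p ∈ P, P.sup' hP fun q => Rbarpq P π x c p q) ≤ -ε) :
    ∃ i ∈ P ×ˢ P ×ˢ ({clo, chi} : Finset ℝ),
      Rtilpq P π x i.2.2 i.1 i.2.1 ps - Rbarpq P π x i.2.2 i.1 i.2.1 ≤ -ε / P.card := by
  obtain ⟨c, hc, hsum⟩ := h
  obtain ⟨p, hp, q, hq, hpq⟩ := exists_sub_le_of_sum_sup'_sub_sum_sup'_le hP hP
    (f := fun p q => Rtilpq P π x c p q ps) (g := fun p q => Rbarpq P π x c p q) hsum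
  obtain ⟨α, β, hαβ⟩ := Rtilpq_sub_Rbarpq_affine (P := P) (π := π) (x := x) (p := p) (q := q) ps
  rcases min_le_iff.mp ((min_le_of_mem_Icc_of_affine hαβ hc).trans hpq) with hlo | hhi
  · exact ⟨(p, q, clo), by simp [hp, hq], hlo⟩
  · exact ⟨(p, q, chi), by simp [hp, hq], hhi⟩

theorem estimated_regret_lower_concentration_uniform_general
    (P : Finset ℝ) (hP : P.Nonempty)
    {T : ℕ} (π : Fin T → ℝ → ℝ)
    (hpmf : ∀ t, IsPMF P (π t)) (hsupp : ∀ t, (suppF P (π t)).Nonempty)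
    (x : Fin T → ℝ → ℝ) (hx : IsAllocSeq P x)
    (clo chi : ℝ) (hclo : 0 ≤ clo) (hlohi : clo ≤ chi) (hchi : chi ≤ P.min' hP) :
    ∀ ε : ℝ, 0 < ε →
      probM P π (fun ps => ∃ c ∈ Set.Icc clo chi,
          (∑ p ∈ P, P.sup' hP fun q => Rtilpq P π x c p q ps) -
            (∑ p ∈ P, P.sup' hP fun q => Rbarpq P π x c p q) ≤ -ε) ≤
        2 * (P.card : ℝ) ^ 2 * Real.exp (-(ε ^ 2) / (2 * (P.card : ℝ) ^ 2 *
          ∑ t : Fin T,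
            ((T : ℝ)⁻¹ * (1 / ((suppF P (π t)).inf' (hsupp t) (π t)) + 1) *
              P.max' hP) ^ 2)) := by
  intro ε hε
  set D := ∑ t : Fin T,
    ((T : ℝ)⁻¹ * (1 / ((suppF P (π t)).inf' (hsupp t) (π t)) + 1) * P.max' hP) ^ 2
  set I := P ×ˢ P ×ˢ ({clo, chi} : Finset ℝ)
  have hpair : ∀ i ∈ I, probM P π (fun ps => Rtilpq P π x i.2.2 i.1 i.2.1 ps -
      Rbarpq P π x i.2.2 i.1 i.2.1 ≤ -(ε / P.card)) ≤ Real.exp (-(ε / P.card) ^ 2 / (2 * D)) := by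
    rintro ⟨p, q, c⟩ hi
    simp only [I, mem_product, mem_insert, mem_singleton] at hi
    obtain ⟨hp, hq, hc⟩ := hi
    have hc' : 0 ≤ c ∧ c ≤ P.min' hP := by
      rcases hc with rfl | rfl <;> constructor <;> linarith
    exact probM_Rtilpq_sub_Rbarpq_le hP hpmf hsupp hx hp hq hc'.1 hc'.2 (by positivity)
  have hcard : (I.card : ℝ) ≤ 2 * P.card ^ 2 := by
    have hends : (({clo, chi} : Finset ℝ).card : ℝ) ≤ 2 := by exact_mod_cast card_le_two
    simp only [I, card_product]
    push_cast
    nlinarith [sq_nonneg (P.card : ℝ)]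
  calc _ ≤ ∑ i ∈ I, probM P π (fun ps => Rtilpq P π x i.2.2 i.1 i.2.1 ps -
          Rbarpq P π x i.2.2 i.1 i.2.1 ≤ -(ε / P.card)) :=
        probM_le_sum_of_forall_exists P (fun t => (hpmf t).1) I _
          fun ps h => by simpa only [neg_div] using exists_pair_endpoint_of_sum_sup'_sub_le hP h
    _ ≤ I.card • Real.exp (-(ε / P.card) ^ 2 / (2 * D)) := sum_le_card_nsmul _ _ _ hpair
    _ ≤ _ := by
        rw [nsmul_eq_mul, show -(ε / P.card) ^ 2 / (2 * D) = -(ε ^ 2) / (2 * P.card ^ 2 * D) by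
          ring]
        exact mul_le_mul_of_nonneg_right hcard (Real.exp_pos _).le

/-- uniform (over all plausible costs `c ∈ [c̲, c̄]`) one-sided
concentration of the estimated regret below the pessimistic regret. -/
theorem estimated_regret_lower_concentration_uniform
    (P : Finset ℝ) (hP : P.Nonempty) (hpos : ∀ p ∈ P, 0 < p)
    {T : ℕ} (hT : 1 ≤ T) (π : Fin T → ℝ → ℝ)
    (hpmf : ∀ t, IsPMF P (π t)) (hsupp : ∀ t, (suppF P (π t)).Nonempty)
    (x : Fin T → ℝ → ℝ) (hx : IsAllocSeq P x)
    (clo chi : ℝ) (hclo : 0 ≤ clo) (hlohi : clo ≤ chi) (hchi : chi ≤ P.min' hP) :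
    ∀ ε : ℝ, 0 < ε →
      probM P π (fun ps => ∃ c ∈ Set.Icc clo chi,
          (∑ p ∈ P, P.sup' hP fun q => Rtilpq P π x c p q ps) -
            (∑ p ∈ P, P.sup' hP fun q => Rbarpq P π x c p q) ≤ -ε) ≤
        2 * (P.card : ℝ) ^ 2 * Real.exp (-(ε ^ 2) / (2 * (P.card : ℝ) ^ 2 *
          ∑ t : Fin T,
            ((T : ℝ)⁻¹ * (1 / ((suppF P (π t)).inf' (hsupp t) (π t)) + 1) *
              P.max' hP) ^ 2)) :=
  estimated_regret_lower_concentration_uniform_general P hP π hpmf hsupp x hx clo chi hclo hlohi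
    hchi
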